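/- arXiv:1609.03919 — 3 statements merged into one kernel-verified Lean document; each statement's English description precedes it below -/
import Mathlib

section
/- Let p be an odd prime, n a positive integer, S coprime to p, and nonnegative integers \alpha, \beta \le n. Then \sum over x in [0,p^n) with p^\alpha | x of e^{2\pi i S p^\beta x^2/p^n} equals p^{n-\alpha} if 2\alpha+\beta \ge n, and equals p^\beta G(S;p^{n-\beta}) if 2\alpha+\beta \le n. -/
open Finset

noncomputable def Gsum (S : ℤ) (k : ℕ) : ℂ :=
  ∑ x ∈ Finset.range k,
    Complex.exp (2 * Real.pi * Complex.I * ((S * (x : ℤ) ^ 2 : ℤ) : ℂ) / (k : ℂ))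

noncomputable def Gsum2 (a b c S : ℤ) (k : ℕ) : ℂ :=
  ∑ x ∈ Finset.range k, ∑ y ∈ Finset.range k,
    Complex.exp (2 * Real.pi * Complex.I *
      ((S * (a * (x : ℤ) ^ 2 + b * (x : ℤ) * (y : ℤ) + c * (y : ℤ) ^ 2) : ℤ) : ℂ) / (k : ℂ))

/-!
Substituting `x = p ^ α * y` turns the sum into `∑_{y < p^(n-α)} e(S p^(2α+β) y² / p^n)`.
If `2α + β ≥ n` every term is `1`. Otherwise the terms are `e(S y² / p^m)` with
`m = n - 2α - β`, which has period `p^m`, so the sum is `p^(α+β) G(S; p^m)`; and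
`G(S; p^2 L) = p G(S; L)` because, writing `x = v p L + u`, the sum over `v` of `e(2Suv/p)`
kills every `u` prime to `p`.
-/

noncomputable def cexpFrac (a : ℤ) (k : ℕ) : ℂ :=
  Complex.exp (2 * Real.pi * Complex.I * a / k)

lemma Gsum_eq_sum_cexpFrac (S : ℤ) (k : ℕ) :
    Gsum S k = ∑ x ∈ range k, cexpFrac (S * (x : ℤ) ^ 2) k := rfl

lemma cexpFrac_eq_zpow (a : ℤ) (k : ℕ) :
    cexpFrac a k = Complex.exp (2 * Real.pi * Complex.I / k) ^ a := by
  rw [cexpFrac, ← Complex.exp_int_mul]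
  ring_nf

lemma cexpFrac_add (a b : ℤ) (k : ℕ) : cexpFrac (a + b) k = cexpFrac a k * cexpFrac b k := by
  simp only [cexpFrac_eq_zpow, zpow_add₀ (Complex.exp_ne_zero _)]

lemma cexpFrac_eq_one_iff {k : ℕ} (hk : k ≠ 0) (a : ℤ) : cexpFrac a k = 1 ↔ (k : ℤ) ∣ a := by
  rw [cexpFrac_eq_zpow, (Complex.isPrimitiveRoot_exp k hk).zpow_eq_one_iff_dvd]

lemma cexpFrac_add_mul_self (a c : ℤ) (k : ℕ) : cexpFrac (a + k * c) k = cexpFrac a k := by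
  rcases eq_or_ne k 0 with rfl | hk
  · simp
  · rw [cexpFrac_add, (cexpFrac_eq_one_iff hk _).mpr (dvd_mul_right _ _), mul_one]

lemma cexpFrac_mul_mul (a : ℤ) (k : ℕ) {c : ℕ} (hc : c ≠ 0) :
    cexpFrac (a * c) (k * c) = cexpFrac a k := by
  have hc' : (c : ℂ) ≠ 0 := Nat.cast_ne_zero.mpr hc
  simp only [cexpFrac]
  congr 1
  push_cast
  rw [← mul_assoc, mul_div_mul_right _ _ hc']

lemma sum_range_cexpFrac_mul {q : ℕ} (hq : q ≠ 0) (c : ℤ) :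
    ∑ v ∈ range q, cexpFrac (c * v) q = if (q : ℤ) ∣ c then (q : ℂ) else 0 := by
  set ζ := cexpFrac c q
  have hpow (v : ℕ) : cexpFrac (c * v) q = ζ ^ v := by
    simp only [ζ, cexpFrac_eq_zpow, zpow_mul, zpow_natCast]
  simp only [hpow]
  split_ifs with hdvd
  · simp [ζ, (cexpFrac_eq_one_iff hq c).mpr hdvd]
  · have hζq : ζ ^ q = 1 := by
      rw [← hpow, cexpFrac_eq_one_iff hq]
      exact dvd_mul_left _ _
    rw [geom_sum_eq (mt (cexpFrac_eq_one_iff hq c).mp hdvd), hζq, sub_self, zero_div]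

lemma sum_range_mul_eq_sum_sum {M : Type*} [AddCommMonoid M] (f : ℕ → M) (a b : ℕ) :
    ∑ x ∈ range (b * a), f x = ∑ v ∈ range b, ∑ u ∈ range a, f (v * a + u) := by
  induction b with
  | zero => simp
  | succ b ih => rw [Nat.succ_mul, sum_range_add, ih, sum_range_succ]

lemma Function.Periodic.sum_range_mul {M : Type*} [AddCommMonoid M] {f : ℕ → M} {N : ℕ}
    (hf : Function.Periodic f N) (t : ℕ) :
    ∑ x ∈ range (t * N), f x = t • ∑ x ∈ range N, f x := by
  have hshift (v u : ℕ) : f (v * N + u) = f u := by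
    simpa [add_comm] using hf.nat_mul v u
  simp only [sum_range_mul_eq_sum_sum, hshift, sum_const, card_range]

lemma sum_filter_dvd_range {M : Type*} [AddCommMonoid M] (f : ℕ → M) {d : ℕ} (hd : d ≠ 0)
    (t : ℕ) : ∑ x ∈ (range (d * t)).filter (d ∣ ·), f x = ∑ y ∈ range t, f (d * y) := by
  have himage : (range (d * t)).filter (d ∣ ·) = (range t).image (d * ·) := by
    ext x
    simp only [mem_filter, mem_range, mem_image]
    constructor
    · rintro ⟨hx, y, rfl⟩
      exact ⟨y, Nat.lt_of_mul_lt_mul_left hx, rfl⟩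
    · rintro ⟨y, hy, rfl⟩
      exact ⟨Nat.mul_lt_mul_of_pos_left hy (Nat.pos_of_ne_zero hd), dvd_mul_right _ _⟩
  rw [himage, sum_image fun a _ b _ h => Nat.eq_of_mul_eq_mul_left (Nat.pos_of_ne_zero hd) h]

lemma ne_zero_of_isCoprime_two_mul {S : ℤ} {q : ℕ} (hq : IsCoprime (2 * S) q) : q ≠ 0 := by
  rintro rfl
  rcases Int.isUnit_iff.mp (isCoprime_zero_right.mp hq) with h | h <;> omega

lemma cexpFrac_mul_sq_periodic (S : ℤ) (N : ℕ) :
    Function.Periodic (fun y : ℕ => cexpFrac (S * (y : ℤ) ^ 2) N) N := fun y => by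
  have hexpand : S * ((y + N : ℕ) : ℤ) ^ 2 = S * (y : ℤ) ^ 2 + N * (S * (2 * y + N)) := by
    push_cast; ring
  simp only [hexpand, cexpFrac_add_mul_self]

lemma Gsum_sq_mul {S : ℤ} {q : ℕ} (hq : IsCoprime (2 * S) q) (L : ℕ) :
    Gsum S (q ^ 2 * L) = q * Gsum S L := by
  rcases eq_or_ne L 0 with rfl | hL
  · simp [Gsum]
  have hq0 := ne_zero_of_isCoprime_two_mul hq
  have hterm (v u : ℕ) : cexpFrac (S * ((v * (q * L) + u : ℕ) : ℤ) ^ 2) (q * (q * L)) =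
      cexpFrac (S * (u : ℤ) ^ 2) (q * (q * L)) * cexpFrac (2 * S * u * v) q := by
    have hexpand : S * ((v * (q * L) + u : ℕ) : ℤ) ^ 2 =
        S * (u : ℤ) ^ 2 + (2 * S * u * v) * ((q * L : ℕ) : ℤ) +
          ((q * (q * L) : ℕ) : ℤ) * (S * (v : ℤ) ^ 2 * L) := by
      push_cast; ring
    rw [hexpand, cexpFrac_add_mul_self, cexpFrac_add, cexpFrac_mul_mul _ _ (mul_ne_zero hq0 hL)]
  have hdvd (u : ℕ) : (q : ℤ) ∣ 2 * S * u ↔ q ∣ u :=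
    ⟨fun h => Int.natCast_dvd_natCast.mp (hq.symm.dvd_of_dvd_mul_left h),
      fun h => dvd_mul_of_dvd_right (Int.natCast_dvd_natCast.mpr h) _⟩
  have hsquare (y : ℕ) : cexpFrac (S * ((q * y : ℕ) : ℤ) ^ 2) (q * (q * L)) =
      cexpFrac (S * (y : ℤ) ^ 2) L := by
    rw [← cexpFrac_mul_mul _ L (pow_ne_zero 2 hq0)]
    congr 1 <;> push_cast <;> ring
  rw [Gsum_eq_sum_cexpFrac, Gsum_eq_sum_cexpFrac, show q ^ 2 * L = q * (q * L) by ring,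
    sum_range_mul_eq_sum_sum, sum_comm]
  simp only [hterm, ← mul_sum, sum_range_cexpFrac_mul hq0, hdvd, mul_ite, mul_zero]
  rw [← sum_filter, sum_filter_dvd_range _ hq0, ← sum_mul, mul_comm]
  simp only [hsquare]

lemma Gsum_sq_pow_mul {S : ℤ} {q : ℕ} (hq : IsCoprime (2 * S) q) (k L : ℕ) :
    Gsum S ((q ^ 2) ^ k * L) = q ^ k * Gsum S L := by
  induction k with
  | zero => simp
  | succ k ih => rw [pow_succ', mul_assoc, Gsum_sq_mul hq, ih, pow_succ']; ring

noncomputable def gaussSumMultiples (q : ℕ) (S : ℤ) (α β n : ℕ) : ℂ :=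
  ∑ x ∈ (range (q ^ n)).filter (q ^ α ∣ ·), cexpFrac (S * (q : ℤ) ^ β * (x : ℤ) ^ 2) (q ^ n)

lemma gaussSumMultiples_eq_sum_range {q : ℕ} (hq : q ≠ 0) (S : ℤ) {α n : ℕ} (hα : α ≤ n)
    (β : ℕ) : gaussSumMultiples q S α β n =
      ∑ y ∈ range (q ^ (n - α)),
        cexpFrac (S * (y : ℤ) ^ 2 * ((q ^ (2 * α + β) : ℕ) : ℤ)) (q ^ n) := by
  have hsplit : q ^ n = q ^ α * q ^ (n - α) := by rw [← pow_add, Nat.add_sub_cancel' hα]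
  rw [gaussSumMultiples, hsplit, sum_filter_dvd_range _ (pow_ne_zero _ hq), ← hsplit]
  congr! 2
  push_cast
  ring

lemma gaussSumMultiples_eq_pow {q : ℕ} (hq : q ≠ 0) (S : ℤ) {α β n : ℕ} (hα : α ≤ n)
    (h : n ≤ 2 * α + β) : gaussSumMultiples q S α β n = (q : ℂ) ^ (n - α) := by
  have hone (y : ℕ) : cexpFrac (S * (y : ℤ) ^ 2 * ((q ^ (2 * α + β) : ℕ) : ℤ)) (q ^ n) = 1 :=
    (cexpFrac_eq_one_iff (pow_ne_zero _ hq) _).mpr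
      (Dvd.dvd.mul_left (Int.natCast_dvd_natCast.mpr (Nat.pow_dvd_pow q h)) _)
  rw [gaussSumMultiples_eq_sum_range hq S hα, sum_congr rfl fun y _ => hone y]
  simp only [sum_const, card_range, nsmul_one, Nat.cast_pow]

lemma gaussSumMultiples_eq_Gsum {S : ℤ} {q : ℕ} (hq : IsCoprime (2 * S) q) {α β n : ℕ}
    (h : 2 * α + β ≤ n) : gaussSumMultiples q S α β n = (q : ℂ) ^ β * Gsum S (q ^ (n - β)) := by
  have hq0 := ne_zero_of_isCoprime_two_mul hq
  set m := n - (2 * α + β)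
  have hterm (y : ℕ) : cexpFrac (S * (y : ℤ) ^ 2 * ((q ^ (2 * α + β) : ℕ) : ℤ)) (q ^ n) =
      cexpFrac (S * (y : ℤ) ^ 2) (q ^ m) := by
    rw [show q ^ n = q ^ m * q ^ (2 * α + β) by rw [← pow_add, Nat.sub_add_cancel h],
      cexpFrac_mul_mul _ _ (pow_ne_zero _ hq0)]
  rw [gaussSumMultiples_eq_sum_range hq0 S (by omega), show n - α = (α + β) + m by omega, pow_add]
  simp only [hterm]
  rw [(cexpFrac_mul_sq_periodic S _).sum_range_mul, ← Gsum_eq_sum_cexpFrac,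
    show n - β = 2 * α + m by omega, pow_add q (2 * α), pow_mul, Gsum_sq_pow_mul hq]
  ring

theorem stmt_6_general (p : ℕ) (hp : p.Prime) (hodd : p ≠ 2) (n : ℕ)
    (S : ℤ) (hS : IsCoprime S (p : ℤ)) (α β : ℕ) (hα : α ≤ n) :
    (2 * α + β ≥ n →
      ∑ x ∈ (Finset.range (p ^ n)).filter (fun x => p ^ α ∣ x),
          Complex.exp (2 * Real.pi * Complex.I *
            ((S * (p : ℤ) ^ β * (x : ℤ) ^ 2 : ℤ) : ℂ) / ((p : ℂ) ^ n)) =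
        (p : ℂ) ^ (n - α)) ∧
    (2 * α + β ≤ n →
      ∑ x ∈ (Finset.range (p ^ n)).filter (fun x => p ^ α ∣ x),
          Complex.exp (2 * Real.pi * Complex.I *
            ((S * (p : ℤ) ^ β * (x : ℤ) ^ 2 : ℤ) : ℂ) / ((p : ℂ) ^ n)) =
        (p : ℂ) ^ β * Gsum S (p ^ (n - β))) := by
  have h2p : IsCoprime (2 : ℤ) p :=
    Nat.isCoprime_iff_coprime.mpr ((Nat.coprime_primes Nat.prime_two hp).mpr hodd.symm)
  refine ⟨fun h => ?_, fun h => ?_⟩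
  · simpa only [gaussSumMultiples, cexpFrac, Nat.cast_pow] using
      gaussSumMultiples_eq_pow hp.ne_zero S hα h
  · simpa only [gaussSumMultiples, cexpFrac, Nat.cast_pow] using
      gaussSumMultiples_eq_Gsum (h2p.mul_left hS) h

theorem stmt_6 (p : ℕ) (hp : p.Prime) (hodd : p ≠ 2) (n : ℕ) (hn : 0 < n)
    (S : ℤ) (hS : IsCoprime S (p : ℤ)) (α β : ℕ) (hα : α ≤ n) (hβ : β ≤ n) :
    (2 * α + β ≥ n →
      ∑ x ∈ (Finset.range (p ^ n)).filter (fun x => p ^ α ∣ x),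
          Complex.exp (2 * Real.pi * Complex.I *
            ((S * (p : ℤ) ^ β * (x : ℤ) ^ 2 : ℤ) : ℂ) / ((p : ℂ) ^ n)) =
        (p : ℂ) ^ (n - α)) ∧
    (2 * α + β ≤ n →
      ∑ x ∈ (Finset.range (p ^ n)).filter (fun x => p ^ α ∣ x),
          Complex.exp (2 * Real.pi * Complex.I *
            ((S * (p : ℤ) ^ β * (x : ℤ) ^ 2 : ℤ) : ℂ) / ((p : ℂ) ^ n)) =
        (p : ℂ) ^ β * Gsum S (p ^ (n - β))) :=
  stmt_6_general p hp hodd n S hS α β hα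
end

section
/- Let n \ge 1, S odd, w an integer, and \alpha,\beta nonnegative integers with 2\alpha+\beta \le n-2. Then \sum_{x=0}^{2^n-1} e^{2\pi i S 2^\beta (2^\alpha x + w)^2 / 2^n} equals 0 if 2^\alpha \nmid w, and equals 2^{\alpha+\beta} G(S;2^{n-\beta}) if 2^\alpha | w. -/
/-!
Write `e_k(a) = exp(2πi a / 2^k)`. If `w = 2^α v`, the summand is `e_m(S (x+v)^2)` with
`m = n - 2α - β ≥ 2`; it has period `2^m`, so the sum is `2^(2α+β) G(S; 2^m)`, and the classical
relation `G(S; 2^(k+2)) = 2 G(S; 2^k)` for `k ≥ 2` turns this into `2^(α+β) G(S; 2^(n-β))`. That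
relation comes from splitting `x` by parity: the even terms give `2 G(S; 2^k)`, while the odd terms
`e_(k+2)(S (2y+1)^2)` change sign when `y` is shifted by `2^(k-1)` and so cancel.

If instead `w = 2^γ u` with `u` odd and `γ < α`, shifting `x` by `2^(n-α-β-γ-2)` adds to the
numerator `2^(n-1)` times an odd number, so the summand changes sign and the sum vanishes.
-/

open Finset

open Function

noncomputable def dyadicExp (k : ℕ) (a : ℤ) : ℂ :=
  Complex.exp (2 * Real.pi * Complex.I * (a : ℂ) / (2 : ℂ) ^ k)

theorem dyadicExp_add (k : ℕ) (a b : ℤ) :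
    dyadicExp k (a + b) = dyadicExp k a * dyadicExp k b := by
  simp only [dyadicExp, ← Complex.exp_add]
  congr 1
  push_cast
  ring

theorem dyadicExp_two_pow_mul (k j : ℕ) (a : ℤ) :
    dyadicExp (k + j) (2 ^ j * a) = dyadicExp k a := by
  simp only [dyadicExp]
  congr 1
  push_cast
  rw [pow_add]
  field_simp

theorem dyadicExp_zero (m : ℤ) : dyadicExp 0 m = 1 := by
  simpa [dyadicExp, mul_comm, mul_assoc, mul_left_comm] using Complex.exp_int_mul_two_pi_mul_I m

theorem dyadicExp_one_of_odd {m : ℤ} (hm : Odd m) : dyadicExp 1 m = -1 := by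
  obtain ⟨r, rfl⟩ := hm
  have hr : dyadicExp 1 (2 * r) = 1 := by
    rw [show (2 : ℤ) * r = 2 ^ 1 * r by ring, dyadicExp_two_pow_mul 0 1, dyadicExp_zero]
  rw [dyadicExp_add, hr, one_mul, dyadicExp]
  simpa [mul_div_assoc, mul_comm, mul_left_comm] using Complex.exp_pi_mul_I

theorem dyadicExp_add_two_pow_mul (k : ℕ) (a m : ℤ) :
    dyadicExp k (a + 2 ^ k * m) = dyadicExp k a := by
  have h := dyadicExp_two_pow_mul 0 k m
  rw [zero_add, dyadicExp_zero] at h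
  rw [dyadicExp_add, h, mul_one]

theorem dyadicExp_add_two_pow_mul_of_odd (k : ℕ) (a : ℤ) {m : ℤ} (hm : Odd m) :
    dyadicExp (k + 1) (a + 2 ^ k * m) = -dyadicExp (k + 1) a := by
  rw [dyadicExp_add, add_comm k, dyadicExp_two_pow_mul, dyadicExp_one_of_odd hm, mul_neg_one]

theorem dyadicExp_mul_sq_periodic (S : ℤ) (k : ℕ) :
    Periodic (fun x : ℤ => dyadicExp k (S * x ^ 2)) (2 ^ k : ℕ) := by
  intro x
  push_cast
  rw [show S * (x + 2 ^ k) ^ 2 = S * x ^ 2 + 2 ^ k * (S * (2 * x + 2 ^ k)) by ring,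
    dyadicExp_add_two_pow_mul]

theorem Finset.sum_range_two_mul {M : Type*} [AddCommMonoid M] (f : ℕ → M) (m : ℕ) :
    ∑ i ∈ range (2 * m), f i = ∑ i ∈ range m, f (2 * i) + ∑ i ∈ range m, f (2 * i + 1) := by
  induction m with
  | zero => simp
  | succ m ih =>
    rw [mul_add_one, sum_range_succ, sum_range_succ, ih, sum_range_succ, sum_range_succ]
    abel

namespace Function

variable {M : Type*} {F : ℤ → M} {N : ℕ}

theorem Periodic.sum_range_mul_s11 [AddCommMonoid M] (hF : Periodic F N) (d : ℕ) :
    ∑ x ∈ range (d * N), F x = d • ∑ x ∈ range N, F x := by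
  induction d with
  | zero => simp
  | succ d ih =>
    rw [add_one_mul, sum_range_add, ih, succ_nsmul]
    congr 1
    refine sum_congr rfl fun x _ => ?_
    push_cast
    rw [add_comm]
    exact hF.nat_mul d x

theorem Periodic.sum_range_add_one [AddCancelCommMonoid M] (hF : Periodic F N) :
    ∑ x ∈ range N, F (x + 1) = ∑ x ∈ range N, F x := by
  have h := (sum_range_succ' (fun x : ℕ => F x) N).symm.trans (sum_range_succ (fun x : ℕ => F x) N)
  push_cast at h
  rw [show F N = F 0 by simpa using hF 0] at h
  exact add_right_cancel h

theorem Periodic.sum_range_comp_add [AddCancelCommMonoid M] (hF : Periodic F N) (v : ℤ) :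
    ∑ x ∈ range N, F (x + v) = ∑ x ∈ range N, F x := by
  induction v using Int.induction_on with
  | zero => simp
  | succ v ih =>
    rw [← ih, ← (hF.add_const v).sum_range_add_one]
    exact sum_congr rfl fun x _ => by ring_nf
  | pred v ih =>
    rw [← ih, ← (hF.add_const (-v - 1)).sum_range_add_one]
    exact sum_congr rfl fun x _ => by ring_nf

theorem Antiperiodic.sum_range_mul_two_mul_eq_zero [AddCommGroup M] {t : ℕ}
    (hF : Antiperiodic F t) (d : ℕ) : ∑ x ∈ range (d * (2 * t)), F x = 0 := by
  have hper : Periodic F (2 * t : ℕ) := by exact_mod_cast hF.periodic_two_mul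
  have hshift : ∑ x ∈ range t, F (t + x : ℕ) = -∑ x ∈ range t, F x := by
    rw [← sum_neg_distrib]
    exact sum_congr rfl fun x _ => by rw [Nat.cast_add, add_comm]; exact hF x
  rw [hper.sum_range_mul_s11, two_mul, sum_range_add, hshift, add_neg_cancel, smul_zero]

end Function

theorem gsum_two_pow (S : ℤ) (k : ℕ) :
    Gsum S (2 ^ k) = ∑ x ∈ range (2 ^ k), dyadicExp k (S * (x : ℤ) ^ 2) := by
  simp [Gsum, dyadicExp]

theorem gsum_two_pow_add_two {S : ℤ} (hS : Odd S) {k : ℕ} (hk : 2 ≤ k) :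
    Gsum S (2 ^ (k + 2)) = 2 * Gsum S (2 ^ k) := by
  obtain ⟨p, rfl⟩ := Nat.exists_eq_add_of_le' hk
  have heven : ∑ y ∈ range (2 ^ (p + 3)), dyadicExp (p + 2 + 2) (S * ((2 * y : ℕ) : ℤ) ^ 2)
      = 2 * Gsum S (2 ^ (p + 2)) := by
    have hterm : ∀ y : ℤ, dyadicExp (p + 2 + 2) (S * (2 * y) ^ 2) = dyadicExp (p + 2) (S * y ^ 2) :=
      fun y => by rw [← dyadicExp_two_pow_mul (p + 2) 2]; ring_nf
    simp only [Nat.cast_mul, Nat.cast_ofNat, hterm]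
    rw [show 2 ^ (p + 3) = 2 * 2 ^ (p + 2) by ring, (dyadicExp_mul_sq_periodic S _).sum_range_mul_s11,
      gsum_two_pow, nsmul_eq_mul, Nat.cast_ofNat]
  have hodd : Antiperiodic (fun y : ℤ => dyadicExp (p + 3 + 1) (S * (2 * y + 1) ^ 2))
      (2 ^ (p + 1) : ℕ) := by
    intro y
    push_cast
    rw [show S * (2 * (y + 2 ^ (p + 1)) + 1) ^ 2
        = S * (2 * y + 1) ^ 2 + 2 ^ (p + 3) * (S * (2 * (y + 2 ^ p) + 1)) by ring]
    exact dyadicExp_add_two_pow_mul_of_odd _ _ (hS.mul (odd_two_mul_add_one _))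
  have hsum := hodd.sum_range_mul_two_mul_eq_zero 2
  rw [show 2 * (2 * 2 ^ (p + 1)) = 2 ^ (p + 3) by ring] at hsum
  rw [gsum_two_pow, show 2 ^ (p + 2 + 2) = 2 * 2 ^ (p + 3) by ring, Finset.sum_range_two_mul, heven]
  simpa using hsum

theorem gsum_two_pow_add_two_mul {S : ℤ} (hS : Odd S) {k : ℕ} (hk : 2 ≤ k) (j : ℕ) :
    Gsum S (2 ^ (k + 2 * j)) = 2 ^ j * Gsum S (2 ^ k) := by
  induction j with
  | zero => simp
  | succ j ih =>
    rw [show k + 2 * (j + 1) = k + 2 * j + 2 by ring, gsum_two_pow_add_two hS (by omega), ih]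
    ring

theorem sum_dyadicExp_eq_zero_of_not_dvd {n : ℕ} {S : ℤ} (hS : Odd S) {w : ℤ} {α β : ℕ}
    (h : 2 * α + β + 2 ≤ n) (hw : ¬ 2 ^ α ∣ w) :
    ∑ x ∈ range (2 ^ n), dyadicExp n (S * 2 ^ β * (2 ^ α * x + w) ^ 2) = 0 := by
  have hw0 : w ≠ 0 := by rintro rfl; exact hw (dvd_zero _)
  have hfin : FiniteMultiplicity (2 : ℤ) w := Int.finiteMultiplicity_iff.2 ⟨by norm_num, hw0⟩
  obtain ⟨u, hwu, hu_ndvd⟩ := hfin.exists_eq_pow_mul_and_not_dvd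
  generalize multiplicity 2 w = γ at hwu
  subst hwu
  have hu : Odd u := Int.not_even_iff_odd.1 (by rwa [even_iff_two_dvd])
  have hγ : γ < α := by
    by_contra! hle
    exact hw ((pow_dvd_pow 2 hle).mul_right u)
  obtain ⟨d, rfl⟩ : ∃ d, α = γ + 1 + d := ⟨α - γ - 1, by omega⟩
  obtain ⟨c, rfl⟩ : ∃ c, n = 2 * γ + 2 * d + β + c + 3 + 1 :=
    ⟨n - (2 * γ + 2 * d + β + 4), by omega⟩
  have hanti : Antiperiodic
      (fun x : ℤ => dyadicExp (2 * γ + 2 * d + β + c + 3 + 1)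
        (S * 2 ^ β * (2 ^ (γ + 1 + d) * x + 2 ^ γ * u) ^ 2)) (2 ^ (d + c + 1) : ℕ) := by
    intro x
    push_cast
    rw [show S * 2 ^ β * (2 ^ (γ + 1 + d) * (x + 2 ^ (d + c + 1)) + 2 ^ γ * u) ^ 2
        = S * 2 ^ β * (2 ^ (γ + 1 + d) * x + 2 ^ γ * u) ^ 2
          + 2 ^ (2 * γ + 2 * d + β + c + 3) * (S * (u + 2 * (2 ^ d * x + 2 ^ (2 * d + c)))) by
      ring]
    exact dyadicExp_add_two_pow_mul_of_odd _ _ (hS.mul (hu.add_even (even_two_mul _)))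
  have hsum := hanti.sum_range_mul_two_mul_eq_zero (2 ^ (2 * γ + d + β + 2))
  rwa [show 2 ^ (2 * γ + d + β + 2) * (2 * 2 ^ (d + c + 1)) = 2 ^ (2 * γ + 2 * d + β + c + 3 + 1) by
    ring] at hsum

theorem sum_dyadicExp_of_dvd {n : ℕ} {S : ℤ} (hS : Odd S) {α β : ℕ} (h : 2 * α + β + 2 ≤ n)
    (v : ℤ) :
    ∑ x ∈ range (2 ^ n), dyadicExp n (S * 2 ^ β * (2 ^ α * x + 2 ^ α * v) ^ 2) =
      2 ^ (α + β) * Gsum S (2 ^ (n - β)) := by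
  obtain ⟨k, rfl⟩ : ∃ k, n = k + 2 + (2 * α + β) := ⟨n - (2 * α + β + 2), by omega⟩
  have hper := dyadicExp_mul_sq_periodic S (k + 2)
  have hterm : ∀ x : ℤ, dyadicExp (k + 2 + (2 * α + β)) (S * 2 ^ β * (2 ^ α * x + 2 ^ α * v) ^ 2)
      = dyadicExp (k + 2) (S * (x + v) ^ 2) :=
    fun x => by rw [← dyadicExp_two_pow_mul (k + 2) (2 * α + β)]; ring_nf
  calc ∑ x ∈ range (2 ^ (k + 2 + (2 * α + β))), dyadicExp (k + 2 + (2 * α + β))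
          (S * 2 ^ β * (2 ^ α * x + 2 ^ α * v) ^ 2)
      = ∑ x ∈ range (2 ^ (2 * α + β) * 2 ^ (k + 2)), dyadicExp (k + 2) (S * (x + v) ^ 2) := by
        simp only [hterm, ← pow_add, add_comm (2 * α + β)]
    _ = 2 ^ (2 * α + β) • Gsum S (2 ^ (k + 2)) := by
        rw [(hper.add_const v).sum_range_mul_s11, hper.sum_range_comp_add, gsum_two_pow]
    _ = 2 ^ (α + β) * Gsum S (2 ^ (k + 2 + (2 * α + β) - β)) := by
        rw [show k + 2 + (2 * α + β) - β = k + 2 + 2 * α by omega,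
          gsum_two_pow_add_two_mul hS le_add_self, nsmul_eq_mul]
        push_cast
        ring

theorem stmt_11_general (n : ℕ) (S : ℤ) (hS : Odd S) (w : ℤ)
    (α β : ℕ) (h : 2 * α + β + 2 ≤ n) :
    (¬ (2 : ℤ) ^ α ∣ w →
      ∑ x ∈ Finset.range (2 ^ n),
          Complex.exp (2 * Real.pi * Complex.I *
            ((S * 2 ^ β * ((2 : ℤ) ^ α * (x : ℤ) + w) ^ 2 : ℤ) : ℂ) / ((2 : ℂ) ^ n)) = 0) ∧
    ((2 : ℤ) ^ α ∣ w →
      ∑ x ∈ Finset.range (2 ^ n),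
          Complex.exp (2 * Real.pi * Complex.I *
            ((S * 2 ^ β * ((2 : ℤ) ^ α * (x : ℤ) + w) ^ 2 : ℤ) : ℂ) / ((2 : ℂ) ^ n)) =
        (2 : ℂ) ^ (α + β) * Gsum S (2 ^ (n - β))) := by
  refine ⟨sum_dyadicExp_eq_zero_of_not_dvd hS h, ?_⟩
  rintro ⟨v, rfl⟩
  exact sum_dyadicExp_of_dvd hS h v

theorem stmt_11 (n : ℕ) (hn : 0 < n) (S : ℤ) (hS : Odd S) (w : ℤ)
    (α β : ℕ) (hα : α ≤ n) (hβ : β ≤ n) (h : 2 * α + β + 2 ≤ n) :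
    (¬ (2 : ℤ) ^ α ∣ w →
      ∑ x ∈ Finset.range (2 ^ n),
          Complex.exp (2 * Real.pi * Complex.I *
            ((S * 2 ^ β * ((2 : ℤ) ^ α * (x : ℤ) + w) ^ 2 : ℤ) : ℂ) / ((2 : ℂ) ^ n)) = 0) ∧
    ((2 : ℤ) ^ α ∣ w →
      ∑ x ∈ Finset.range (2 ^ n),
          Complex.exp (2 * Real.pi * Complex.I *
            ((S * 2 ^ β * ((2 : ℤ) ^ α * (x : ℤ) + w) ^ 2 : ℤ) : ℂ) / ((2 : ℂ) ^ n)) =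
        (2 : ℂ) ^ (α + β) * Gsum S (2 ^ (n - β))) :=
  stmt_11_general n S hS w α β h
end

section
/- Let n \ge 1, S odd, and a,b,c integers with gcd(a,b,c)=1, a \equiv 2^\alpha A (mod 2^n) with A odd and \alpha+1 < n, and 2^\alpha | c. Then G(a,b,c;S;2^n) = (1/4) G(SA;2^{n-\alpha}) \cdot G(SA\Delta;2^{n+\alpha+2}), where \Delta = 4ac-b^2. -/
open Finset

/-! Write `eFrac k r = exp (2πi r / k)`. A sum of a `k`-periodic function over `range k` is a
sum over `ZMod k`, hence invariant under translations and unit dilations; this drives every step.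

Since `b` is odd unless `α = 0`, writing `x = s + 2^(n-α) t` turns the sum over `t` into a
character sum that forces `2^α ∣ y`, whence
`G(2^α A, b, c; S; 2^n) = 2^α G(A, b, 2^α c; S; 2^(n-α))`. For odd `A` and `4 ∣ N`, the
substitution `y ↦ A y` and `4 (x² + bxy + cy²) = (2x + by)² + Δ y²` separate the variables:
`∑ₓ eFrac (4N) (T (2x + u)²)` is `G(T; N)` for even `u` and `0` for odd `u`, since shifting `x`
by `N / 2` changes its sign. This gives `G(A, b, c; S; N) = G(SA; N) G(SAΔ; 4N) / 4`, and
`G(T; 4N) = 2 G(T; N)` for odd `T` absorbs the factor `2^α`. -/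

open Function

theorem Function.Periodic.eq_of_modEq {α : Type*} {f : ℤ → α} {k : ℤ} (hf : Periodic f k)
    {x y : ℤ} (h : x ≡ y [ZMOD k]) : f x = f y := by
  obtain ⟨t, ht⟩ := Int.modEq_iff_dvd.mp h
  rw [show y = x + t * k by linarith]
  simpa using (hf.int_mul t x).symm

section PeriodicSum

variable {M : Type*} [AddCommMonoid M]

theorem ZMod.sum_range_natCast {k : ℕ} [NeZero k] (g : ZMod k → M) :
    ∑ x ∈ range k, g x = ∑ z, g z := by
  refine sum_nbij' (fun x => (x : ZMod k)) ZMod.val (by simp) (by simp [ZMod.val_lt])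
    (fun x hx => ZMod.val_natCast_of_lt (mem_range.mp hx)) (fun z _ => ZMod.natCast_zmod_val z)
    (fun _ _ => rfl)

theorem sum_range_mul_eq_sum_sum_s15 (f : ℕ → M) (k m : ℕ) :
    ∑ x ∈ range (k * m), f x = ∑ t ∈ range m, ∑ s ∈ range k, f (s + k * t) := by
  induction m with
  | zero => simp
  | succ m ih =>
    rw [Nat.mul_succ, sum_range_add, ih, sum_range_succ]
    simp only [add_comm]

theorem sum_range_mul_ite_dvd (q k : ℕ) [NeZero q] (g : ℕ → M) :
    ∑ y ∈ range (q * k), (if q ∣ y then g y else 0) = ∑ t ∈ range k, g (q * t) := by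
  rw [sum_range_mul_eq_sum_sum_s15]
  refine sum_congr rfl fun t _ => ?_
  rw [sum_eq_single_of_mem 0 (mem_range.mpr (NeZero.pos q)), if_pos (by simp), zero_add]
  intro r hr hr0
  rw [if_neg]
  rw [Nat.dvd_add_left (dvd_mul_right q t)]
  exact Nat.not_dvd_of_pos_of_lt (Nat.pos_of_ne_zero hr0) (mem_range.mp hr)

theorem sum_range_four_mul_eq_even_add_odd (N : ℕ) (f : ℤ → M) :
    ∑ x ∈ range (4 * N), f x =
      ∑ t ∈ range (N * 2), f (2 * t) + ∑ t ∈ range (N * 2), f (2 * t + 1) := by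
  rw [show 4 * N = 2 * (N * 2) by ring, sum_range_mul_eq_sum_sum_s15, ← sum_add_distrib]
  refine sum_congr rfl fun t _ => ?_
  simp [sum_range_succ, add_comm]

variable {f : ℤ → M} {k : ℕ}

theorem Function.Periodic.sum_range_mul_s15 (hf : Periodic f k) (m : ℕ) :
    ∑ x ∈ range (k * m), f x = m • ∑ x ∈ range k, f x := by
  calc ∑ x ∈ range (k * m), f x = ∑ t ∈ range m, ∑ s ∈ range k, f (s + k * t) := by
        rw [sum_range_mul_eq_sum_sum_s15]
        push_cast
        rfl
    _ = ∑ t ∈ range m, ∑ s ∈ range k, f s :=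
        sum_congr rfl fun t _ => sum_congr rfl fun s _ => by rw [mul_comm, hf.nat_mul t]
    _ = m • ∑ x ∈ range k, f x := by rw [sum_const, card_range]

theorem Function.Periodic.sum_range_comp [NeZero k] (hf : Periodic f k) (e : ZMod k ≃ ZMod k)
    {φ : ℤ → ℤ} (hφ : ∀ x : ℤ, (φ x : ZMod k) = e x) :
    ∑ x ∈ range k, f (φ x) = ∑ x ∈ range k, f x := by
  have hval : ∀ x : ℤ, f x = f (x : ZMod k).val := fun x =>
    hf.eq_of_modEq ((ZMod.intCast_eq_intCast_iff _ _ _).mp (by simp)).symm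
  calc ∑ x ∈ range k, f (φ x) = ∑ x ∈ range k, f (e x).val := by
        refine sum_congr rfl fun x _ => ?_
        rw [hval, hφ]
        simp
    _ = ∑ z : ZMod k, f (e z).val := ZMod.sum_range_natCast fun z : ZMod k => f (e z).val
    _ = ∑ z : ZMod k, f z.val := e.sum_comp fun z : ZMod k => f z.val
    _ = ∑ x ∈ range k, f x := by
        rw [← ZMod.sum_range_natCast fun z : ZMod k => f z.val]
        exact sum_congr rfl fun x _ => by rw [hval x]; simp

theorem Function.Periodic.sum_range_comp_add_s15 [NeZero k] (hf : Periodic f k) (c : ℤ) :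
    ∑ x ∈ range k, f (x + c) = ∑ x ∈ range k, f x :=
  hf.sum_range_comp (Equiv.addRight (c : ZMod k)) (φ := fun x => x + c) fun x => by simp

theorem Function.Periodic.sum_range_comp_mul [NeZero k] (hf : Periodic f k) {u : ℤ}
    (hu : IsCoprime u k) : ∑ x ∈ range k, f (u * x) = ∑ x ∈ range k, f x :=
  hf.sum_range_comp (ZMod.unitOfIsCoprime u hu).mulLeft (φ := fun x => u * x) fun x => by simp

end PeriodicSum

noncomputable def eFrac (k : ℕ) (r : ℤ) : ℂ := Complex.exp (2 * Real.pi * Complex.I * r / k)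

theorem gsum_eq_sum_eFrac (T : ℤ) (k : ℕ) :
    Gsum T k = ∑ x ∈ range k, eFrac k (T * x ^ 2) := rfl

theorem gsum2_eq_sum_eFrac (a b c S : ℤ) (k : ℕ) :
    Gsum2 a b c S k =
      ∑ x ∈ range k, ∑ y ∈ range k, eFrac k (S * (a * x ^ 2 + b * x * y + c * y ^ 2)) := rfl

theorem eFrac_add (k : ℕ) (r s : ℤ) : eFrac k (r + s) = eFrac k r * eFrac k s := by
  rw [eFrac, eFrac, eFrac, ← Complex.exp_add]
  push_cast
  ring_nf

theorem eFrac_eq_stdAddChar {k : ℕ} [NeZero k] (r : ℤ) :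
    eFrac k r = ZMod.stdAddChar (r : ZMod k) :=
  (ZMod.stdAddChar_coe r).symm

theorem eFrac_congr {k : ℕ} [NeZero k] {r s : ℤ} (h : r ≡ s [ZMOD k]) :
    eFrac k r = eFrac k s := by
  rw [eFrac_eq_stdAddChar, eFrac_eq_stdAddChar, (ZMod.intCast_eq_intCast_iff _ _ _).mpr h]

theorem eFrac_add_mul_self {k : ℕ} [NeZero k] (r t : ℤ) : eFrac k (r + k * t) = eFrac k r :=
  eFrac_congr (by simp [Int.ModEq])

theorem eFrac_mul_mul {m : ℕ} (hm : m ≠ 0) (k : ℕ) (r : ℤ) :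
    eFrac (m * k) (m * r) = eFrac k r := by
  have : (m : ℂ) ≠ 0 := Nat.cast_ne_zero.mpr hm
  rw [eFrac, eFrac]
  push_cast
  rw [mul_left_comm _ (m : ℂ), mul_comm (m : ℂ) k, mul_comm (m : ℂ),
    mul_div_mul_right _ _ this]

theorem eFrac_two_of_odd {r : ℤ} (hr : Odd r) : eFrac 2 r = -1 := by
  rw [eFrac, show 2 * (Real.pi : ℂ) * Complex.I * r / (2 : ℕ) = r * (Real.pi * Complex.I) by
    push_cast; ring, Complex.exp_int_mul, Complex.exp_pi_mul_I, hr.neg_one_zpow]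

theorem sum_range_eFrac_mul {k : ℕ} [NeZero k] (r : ℤ) :
    ∑ t ∈ range k, eFrac k (r * t) = if (k : ℤ) ∣ r then (k : ℂ) else 0 := by
  have h := AddChar.sum_mulShift (r : ZMod k) (ZMod.isPrimitive_stdAddChar k)
  rw [← ZMod.sum_range_natCast] at h
  simp only [ZMod.card, ZMod.intCast_zmod_eq_zero_iff_dvd, apply_ite (Nat.cast : ℕ → ℂ),
    Nat.cast_zero] at h
  rw [← h]
  refine sum_congr rfl fun t _ => ?_
  rw [eFrac_eq_stdAddChar]
  push_cast
  ring_nf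

theorem gsum_congr {k : ℕ} [NeZero k] {T T' : ℤ} (h : T ≡ T' [ZMOD k]) :
    Gsum T k = Gsum T' k :=
  sum_congr rfl fun x _ => eFrac_congr (by gcongr)

theorem gsum2_congr {k : ℕ} [NeZero k] {a a' : ℤ} (h : a ≡ a' [ZMOD k]) (b c S : ℤ) :
    Gsum2 a b c S k = Gsum2 a' b c S k :=
  sum_congr rfl fun x _ => sum_congr rfl fun y _ => eFrac_congr (by gcongr)

theorem sum_range_mul_eFrac_quadratic (q k : ℕ) [NeZero q] [NeZero k] (A L C : ℤ) :
    ∑ x ∈ range (q * k), eFrac (q * k) (q * A * x ^ 2 + L * x + C) =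
      (if (q : ℤ) ∣ L then (q : ℂ) else 0) *
        ∑ s ∈ range k, eFrac (q * k) (q * A * s ^ 2 + L * s + C) := by
  rw [show range (q * k) = range (k * q) by rw [mul_comm], sum_range_mul_eq_sum_sum_s15,
    ← sum_range_eFrac_mul, sum_mul_sum]
  refine sum_congr rfl fun t _ => sum_congr rfl fun s _ => ?_
  push_cast
  rw [show (q : ℤ) * A * (s + k * t) ^ 2 + L * (s + k * t) + C =
      (q * A * s ^ 2 + L * s + C) + k * (L * t) + (q * k : ℕ) * (A * (2 * s * t + k * t ^ 2)) by
    push_cast; ring, eFrac_add_mul_self, eFrac_add, mul_comm q k,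
    eFrac_mul_mul (NeZero.ne k), mul_comm]

theorem gsum2_mul_of_isCoprime (q k : ℕ) [NeZero q] [NeZero k] {S b : ℤ}
    (hb : IsCoprime (S * b) q) (A c : ℤ) :
    Gsum2 (q * A) b c S (q * k) = q * Gsum2 A b (q * c) S k := by
  have hdvd (y : ℕ) : (q : ℤ) ∣ S * b * y ↔ q ∣ y :=
    ⟨fun h => Int.natCast_dvd_natCast.mp (hb.symm.dvd_of_dvd_mul_left h),
      fun h => (Int.natCast_dvd_natCast.mpr h).mul_left _⟩
  rw [gsum2_eq_sum_eFrac, gsum2_eq_sum_eFrac, sum_comm, sum_comm (s := range k)]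
  calc ∑ y ∈ range (q * k), ∑ x ∈ range (q * k),
        eFrac (q * k) (S * (q * A * x ^ 2 + b * x * y + c * y ^ 2))
      = ∑ y ∈ range (q * k), (if (q : ℤ) ∣ S * b * y then (q : ℂ) else 0) *
          ∑ s ∈ range k,
          eFrac (q * k) (q * (S * A) * s ^ 2 + S * b * y * s + S * c * y ^ 2) := by
        refine sum_congr rfl fun y _ => ?_
        rw [← sum_range_mul_eFrac_quadratic]
        exact sum_congr rfl fun x _ => by ring_nf
    _ = q * ∑ t ∈ range k, ∑ s ∈ range k,
          eFrac k (S * (A * s ^ 2 + b * s * t + q * c * t ^ 2)) := by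
        simp only [hdvd, ite_zero_mul]
        rw [sum_range_mul_ite_dvd, mul_sum]
        refine sum_congr rfl fun t _ => congrArg _ (sum_congr rfl fun s _ => ?_)
        rw [← eFrac_mul_mul (NeZero.ne q) k]
        push_cast
        ring_nf

section FourN

variable {N : ℕ}

theorem sum_eFrac_sq_two_mul (T : ℤ) :
    ∑ x ∈ range N, eFrac (4 * N) (T * (2 * x) ^ 2) = Gsum T N := by
  rw [gsum_eq_sum_eFrac]
  refine sum_congr rfl fun x _ => ?_
  rw [show T * (2 * x) ^ 2 = (4 : ℕ) * (T * x ^ 2) by push_cast; ring,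
    eFrac_mul_mul four_ne_zero]

variable [NeZero N]

theorem periodic_eFrac_sq_two_mul_add (T u : ℤ) :
    Periodic (fun x : ℤ => eFrac (4 * N) (T * (2 * x + u) ^ 2)) N := fun x => by
  dsimp only
  rw [show T * (2 * (x + N) + u) ^ 2 = T * (2 * x + u) ^ 2 + (4 * N : ℕ) * (T * (2 * x + u + N))
    by push_cast; ring, eFrac_add_mul_self]

/-- Shifting by `N / 2` multiplies each term by `eFrac 2 (odd) = -1`, so the sum equals its
own negative. -/
theorem sum_eFrac_odd_sq_eq_zero (hN : 4 ∣ N) {T : ℤ} (hT : Odd T) :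
    ∑ x ∈ range N, eFrac (4 * N) (T * (2 * x + 1) ^ 2) = 0 := by
  obtain ⟨m, rfl⟩ := hN
  have hm : m ≠ 0 := right_ne_zero_of_mul (NeZero.ne (4 * m))
  have hanti (x : ℤ) : eFrac (4 * (4 * m)) (T * (2 * (x + 2 * m) + 1) ^ 2) =
      -eFrac (4 * (4 * m)) (T * (2 * x + 1) ^ 2) := by
    have hodd : Odd (T * (2 * x + 1)) := hT.mul (odd_two_mul_add_one x)
    rw [show T * (2 * (x + 2 * m) + 1) ^ 2 = T * (2 * x + 1) ^ 2 + (8 * m : ℕ) * (T * (2 * x + 1))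
        + (4 * (4 * m) : ℕ) * (m * T) by push_cast; ring, eFrac_add_mul_self, eFrac_add,
      show 4 * (4 * m) = 8 * m * 2 by ring, eFrac_mul_mul (by positivity), eFrac_two_of_odd hodd,
      mul_neg_one]
  have hshift := (periodic_eFrac_sq_two_mul_add (N := 4 * m) T 1).sum_range_comp_add_s15 (2 * m)
  simp only [hanti, sum_neg_distrib] at hshift
  exact self_eq_neg.mp hshift.symm

theorem sum_range_mul_two_eFrac_sq_two_mul (T : ℤ) :
    ∑ x ∈ range (N * 2), eFrac (4 * N) (T * (2 * x) ^ 2) = 2 * Gsum T N := by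
  have hper := periodic_eFrac_sq_two_mul_add (N := N) T 0
  simp only [add_zero] at hper
  rw [hper.sum_range_mul_s15, sum_eFrac_sq_two_mul, nsmul_eq_mul, Nat.cast_ofNat]

theorem sum_eFrac_sq_two_mul_add (hN : 4 ∣ N) {T : ℤ} (hT : Odd T) (u : ℤ) :
    ∑ x ∈ range N, eFrac (4 * N) (T * (2 * x + u) ^ 2) = if Even u then Gsum T N else 0 := by
  obtain ⟨q, r, hr, rfl⟩ : ∃ q r : ℤ, (r = 0 ∨ r = 1) ∧ u = 2 * q + r := by
    obtain ⟨q, rfl | rfl⟩ := u.even_or_odd'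
    exacts [⟨q, 0, by simp⟩, ⟨q, 1, by simp⟩]
  have hshift : ∑ x ∈ range N, eFrac (4 * N) (T * (2 * x + (2 * q + r)) ^ 2) =
      ∑ x ∈ range N, eFrac (4 * N) (T * (2 * x + r) ^ 2) := by
    rw [← (periodic_eFrac_sq_two_mul_add T r).sum_range_comp_add_s15 q]
    exact sum_congr rfl fun x _ => by ring_nf
  rw [hshift]
  rcases hr with rfl | rfl
  · rw [if_pos (by simp), ← sum_eFrac_sq_two_mul]
    simp only [add_zero]
  · rw [if_neg (by simp [parity_simps]), sum_eFrac_odd_sq_eq_zero hN hT]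

theorem gsum_four_mul (hN : 4 ∣ N) {T : ℤ} (hT : Odd T) : Gsum T (4 * N) = 2 * Gsum T N := by
  rw [gsum_eq_sum_eFrac, sum_range_four_mul_eq_even_add_odd N fun x => eFrac (4 * N) (T * x ^ 2),
    sum_range_mul_two_eFrac_sq_two_mul, (periodic_eFrac_sq_two_mul_add T 1).sum_range_mul_s15,
    sum_eFrac_odd_sq_eq_zero hN hT, smul_zero, add_zero]

theorem gsum_four_pow_mul (hN : 4 ∣ N) {T : ℤ} {j : ℕ} (h : j = 0 ∨ Odd T) :
    Gsum T (4 ^ j * N) = 2 ^ j * Gsum T N := by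
  rcases h with rfl | hT
  · simp
  induction j with
  | zero => simp
  | succ j ih =>
    rw [pow_succ', mul_assoc, gsum_four_mul (dvd_mul_of_dvd_right hN _) hT, ih, pow_succ']
    ring

theorem sum_ite_even_mul_eFrac_sq (hN : 4 ∣ N) {b R : ℤ} (h : Even b ∨ Odd R) :
    ∑ y ∈ range (4 * N), (if Even (b * y) then eFrac (4 * N) (R * y ^ 2) else 0) =
      Gsum R (4 * N) := by
  rcases b.even_or_odd with hb | hb
  · exact sum_congr rfl fun y _ => if_pos (hb.mul_right _)
  have hR := h.resolve_left (Int.not_even_iff_odd.mpr hb)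
  have heven (t : ℤ) : Even (b * (2 * t)) := (even_two_mul t).mul_left b
  have hodd (t : ℤ) : ¬ Even (b * (2 * t + 1)) := by simp [parity_simps, hb]
  rw [sum_range_four_mul_eq_even_add_odd N
      fun y => if Even (b * y) then eFrac (4 * N) (R * y ^ 2) else 0,
    gsum_four_mul hN hR]
  simp only [heven, hodd, if_true, if_false, sum_const_zero, add_zero,
    sum_range_mul_two_eFrac_sq_two_mul]

theorem gsum2_eq_gsum2_one {A : ℤ} (hA : IsCoprime A N) (b c S : ℤ) :
    Gsum2 A b c S N = Gsum2 1 b (A * c) (S * A) N := by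
  rw [gsum2_eq_sum_eFrac, gsum2_eq_sum_eFrac]
  refine sum_congr rfl fun x _ => ?_
  have hper : Periodic (fun y : ℤ => eFrac N (S * (A * x ^ 2 + b * x * y + c * y ^ 2))) N :=
    fun y => eFrac_congr (by gcongr <;> exact Int.add_modEq_right)
  rw [← hper.sum_range_comp_mul hA]
  exact sum_congr rfl fun y _ => by ring_nf

theorem gsum2_one_eq (hN : 4 ∣ N) {T : ℤ} (hT : Odd T) (b c : ℤ) :
    Gsum2 1 b c T N = 1 / 4 * Gsum T N * Gsum (T * (4 * c - b ^ 2)) (4 * N) := by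
  set F : ℤ → ℂ := fun y =>
    ∑ x ∈ range N, eFrac N (T * (1 * x ^ 2 + b * x * y + c * y ^ 2))
  have hper : Periodic F N := fun y =>
    sum_congr rfl fun x _ => eFrac_congr (by gcongr <;> exact Int.add_modEq_right)
  -- completing the square: `4 (x² + bxy + cy²) = (2x + by)² + (4c - b²) y²`
  have hF (y : ℤ) : F y = (if Even (b * y) then Gsum T N else 0) *
      eFrac (4 * N) (T * (4 * c - b ^ 2) * y ^ 2) := by
    rw [← sum_eFrac_sq_two_mul_add hN hT, sum_mul]
    refine sum_congr rfl fun x _ => ?_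
    rw [← eFrac_add, ← eFrac_mul_mul four_ne_zero N]
    congr 1
    push_cast
    ring
  have hb : Even b ∨ Odd (T * (4 * c - b ^ 2)) :=
    b.even_or_odd.imp id fun hb => hT.mul (Even.sub_odd ⟨2 * c, by ring⟩ hb.pow)
  have h4 : (4 : ℂ) * Gsum2 1 b c T N = Gsum T N * Gsum (T * (4 * c - b ^ 2)) (4 * N) := by
    calc (4 : ℂ) * Gsum2 1 b c T N = ∑ y ∈ range (N * 4), F y := by
          rw [hper.sum_range_mul_s15, nsmul_eq_mul, Nat.cast_ofNat, gsum2_eq_sum_eFrac, sum_comm]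
      _ = Gsum T N * Gsum (T * (4 * c - b ^ 2)) (4 * N) := by
          rw [← sum_ite_even_mul_eFrac_sq hN hb, mul_sum, mul_comm N 4]
          refine sum_congr rfl fun y _ => ?_
          rw [hF]
          split_ifs <;> simp
  linear_combination h4 / 4

theorem gsum2_eq_of_isCoprime (hN : 4 ∣ N) {S A : ℤ} (hS : Odd S) (hA : IsCoprime A N)
    (b c : ℤ) :
    Gsum2 A b c S N = 1 / 4 * Gsum (S * A) N * Gsum (S * A * (4 * A * c - b ^ 2)) (4 * N) := by
  have h2 : (2 : ℤ) ∣ N := by exact_mod_cast (dvd_trans (by norm_num) hN)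
  have hA_odd : Odd A := Int.isCoprime_two_right.mp (hA.of_isCoprime_of_dvd_right h2)
  rw [gsum2_eq_gsum2_one hA, gsum2_one_eq hN (hS.mul hA_odd), mul_assoc 4 A c]

end FourN

theorem Int.isCoprime_two_pow_of_eq_zero_or_odd {x : ℤ} {j : ℕ} (h : j = 0 ∨ Odd x) :
    IsCoprime x (2 ^ j) := by
  rcases h with rfl | hx
  · exact isCoprime_one_right
  · exact (Int.isCoprime_two_right.mpr hx).pow_right

theorem eq_zero_or_odd_of_gcd_eq_one {a b c A : ℤ} {α n : ℕ}
    (habc : Int.gcd (Int.gcd a b) (2 ^ α * c) = 1) (ha : a ≡ 2 ^ α * A [ZMOD 2 ^ n])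
    (hαn : α < n) : α = 0 ∨ Odd b := by
  refine or_iff_not_imp_left.mpr fun hα => Int.not_even_iff_odd.mp fun hb => ?_
  have h2 : (2 : ℤ) ∣ 2 ^ α := dvd_pow_self 2 hα
  have h2a : (2 : ℤ) ∣ a :=
    (ha.of_dvd (dvd_pow_self 2 (by omega))).dvd_iff.mpr (dvd_mul_of_dvd_left h2 A)
  have h2gcd := Int.dvd_coe_gcd (Int.dvd_coe_gcd h2a hb.two_dvd) (dvd_mul_of_dvd_left h2 c)
  rw [habc] at h2gcd
  norm_num at h2gcd

theorem stmt_15_general (n : ℕ) (S a b c A : ℤ) (α : ℕ)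
    (hS : Odd S) (habc : Int.gcd (Int.gcd a b) c = 1)
    (hA : Odd A) (ha : a ≡ (2 : ℤ) ^ α * A [ZMOD ((2 : ℤ) ^ n)])
    (hαn : α + 1 < n) (hc : (2 : ℤ) ^ α ∣ c) :
    Gsum2 a b c S (2 ^ n) =
      (1 / 4 : ℂ) * Gsum (S * A) (2 ^ (n - α)) *
        Gsum (S * A * (4 * a * c - b ^ 2)) (2 ^ (n + α + 2)) := by
  obtain ⟨c₀, rfl⟩ := hc
  obtain ⟨m, rfl⟩ : ∃ m, n = α + m := ⟨n - α, by omega⟩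
  have hm : 4 ∣ 2 ^ m := pow_dvd_pow 2 (by omega : 2 ≤ m)
  have hb : α = 0 ∨ Odd b := eq_zero_or_odd_of_gcd_eq_one habc ha (by omega)
  have hAm : IsCoprime A ((2 ^ m : ℕ) : ℤ) := by
    simpa using Int.isCoprime_two_pow_of_eq_zero_or_odd (j := m) (Or.inr hA)
  have hmul := gsum2_mul_of_isCoprime (2 ^ α) (2 ^ m)
    (by simpa using Int.isCoprime_two_pow_of_eq_zero_or_odd (hb.imp_right hS.mul)) A (2 ^ α * c₀)
  push_cast at hmul
  have hR : S * A * (4 * a * (2 ^ α * c₀) - b ^ 2) ≡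
      S * A * (4 * A * (2 ^ α * (2 ^ α * c₀)) - b ^ 2) [ZMOD ((4 * 2 ^ m : ℕ) : ℤ)] := by
    rw [show 4 * A * (2 ^ α * (2 ^ α * c₀)) = 4 * (2 ^ α * A) * (2 ^ α * c₀) by ring]
    push_cast
    gcongr S * A * (?_ * _ - _)
    exact (ha.of_dvd (pow_dvd_pow 2 (Nat.le_add_left m α))).mul_left' (c := 4)
  rw [gsum2_congr (k := 2 ^ (α + m)) (a' := 2 ^ α * A) (by exact_mod_cast ha), pow_add, hmul,
    gsum2_eq_of_isCoprime hm hS hAm, Nat.add_sub_cancel_left,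
    show 2 ^ (α + m + α + 2) = 4 ^ α * (4 * 2 ^ m) by
      rw [show 4 = 2 ^ 2 from rfl, ← pow_mul]; ring,
    gsum_four_pow_mul (dvd_mul_of_dvd_right hm 4) (hb.imp_right fun hb =>
      (hS.mul hA).mul (Even.sub_odd ⟨2 * a * (2 ^ α * c₀), by ring⟩ hb.pow)),
    gsum_congr hR]
  ring

theorem stmt_15 (n : ℕ) (hn : 0 < n) (S a b c A : ℤ) (α : ℕ)
    (hS : Odd S) (habc : Int.gcd (Int.gcd a b) c = 1)
    (hA : Odd A) (ha : a ≡ (2 : ℤ) ^ α * A [ZMOD ((2 : ℤ) ^ n)])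
    (hαn : α + 1 < n) (hc : (2 : ℤ) ^ α ∣ c) :
    Gsum2 a b c S (2 ^ n) =
      (1 / 4 : ℂ) * Gsum (S * A) (2 ^ (n - α)) *
        Gsum (S * A * (4 * a * c - b ^ 2)) (2 ^ (n + α + 2)) :=
  stmt_15_general n S a b c A α hS habc hA ha hαn hc
end
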